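/- Let a_1, ..., a_m ≥ 2 be integers and define p, q by p/q = [a_1, ..., a_m]^- in lowest terms. Then the m × m tridiagonal matrix M with diagonal entries a_i and off-diagonal entries -1 satisfies det(M) = p, and Z^m / M Z^m is a cyclic group of order p. -/

import Mathlib

/-!
Expanding along the first row, the determinants of the tridiagonal matrices satisfy the
continuant recursion `D(a₁, …, a_m) = a₁ D(a₂, …, a_m) - D(a₃, …, a_m)`, which is also the
recursion for numerator and denominator of `[a₁, …, a_m]⁻`. When all `aᵢ ≥ 2` these
continuants are positive and consecutive ones are coprime, so `p = det M`. The cokernel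
`ℤ^m / M ℤ^m` has order `|det M|` (Smith normal form), and it is generated by `e₀`: the
column relation `M e_j = -e_{j-1} + a_{j+1} e_j - e_{j+1}` expresses `e_{j+1}` through
`e_j` and `e_{j-1}` modulo the image of `M`.
-/

open scoped BigOperators

/-- The negative (Hirzebruch–Jung) continued fraction
`[a₁, …, a_m]⁻ = a₁ - 1/(a₂ - 1/(⋯ - 1/a_m))`. -/
def ncf : List ℚ → ℚ
  | [] => 0
  | [b] => b
  | b :: c :: l => b - 1 / ncf (c :: l)

def triMat (m : ℕ) (a : ℕ → ℤ) : Matrix (Fin m) (Fin m) ℤ :=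
  Matrix.of fun i j =>
    if i = j then a (i.val + 1)
    else if i.val + 1 = j.val ∨ j.val + 1 = i.val then -1 else 0

open Matrix

theorem triMat_submatrix_succ_succ (n : ℕ) (a : ℕ → ℤ) :
    (triMat (n + 1) a).submatrix Fin.succ Fin.succ = triMat n fun i => a (i + 1) := by
  ext i j
  simp [triMat, Fin.ext_iff]

theorem det_triMat_add_two (n : ℕ) (a : ℕ → ℤ) :
    (triMat (n + 2) a).det =
      a 1 * (triMat (n + 1) fun i => a (i + 1)).det - (triMat n fun i => a (i + 2)).det := by
  -- the minor of the `(0, 1)` entry; its first column is `-e₀`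
  set B := (triMat (n + 2) a).submatrix Fin.succ (Fin.succ 0).succAbove
  have hB : B.submatrix Fin.succ Fin.succ = triMat n fun i => a (i + 2) := by
    ext i j
    simp [B, triMat, Fin.ext_iff, Fin.succAbove]
  have hminor : B.det = -(triMat n fun i => a (i + 2)).det := by
    rw [det_succ_column_zero, Fin.sum_univ_succ, Finset.sum_eq_zero, Fin.succAbove_zero, hB]
    · simp [B, triMat]
    · intro i _
      simp [B, triMat, Fin.ext_iff]
  rw [det_succ_row_zero, Fin.sum_univ_succ, Fin.sum_univ_succ, Finset.sum_eq_zero, hminor,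
    Fin.succAbove_zero, triMat_submatrix_succ_succ]
  · simp [triMat, sub_eq_add_neg]
  · intro j _
    simp [triMat, Fin.ext_iff]

theorem det_triMat_zero (a : ℕ → ℤ) : (triMat 0 a).det = 1 :=
  det_isEmpty

theorem det_triMat_one (a : ℕ → ℤ) : (triMat 1 a).det = a 1 := by
  simp [triMat]

theorem det_triMat_tail_mem_Ioo (n : ℕ) (a : ℕ → ℤ) (ha : ∀ i, 1 ≤ i → i ≤ n + 1 → 2 ≤ a i) :
    (triMat n fun i => a (i + 1)).det ∈ Set.Ioo 0 (triMat (n + 1) a).det := by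
  induction n generalizing a with
  | zero =>
    rw [det_triMat_zero, det_triMat_one]
    exact ⟨one_pos, ha 1 le_rfl le_rfl⟩
  | succ n ih =>
    obtain ⟨hpos, hlt⟩ := ih (fun i => a (i + 1)) fun i h1 h2 => ha (i + 1) (by omega) (by omega)
    have ha1 := ha 1 le_rfl (by omega)
    rw [det_triMat_add_two]
    constructor <;> nlinarith

theorem isCoprime_det_triMat_tail (n : ℕ) (a : ℕ → ℤ) :
    IsCoprime (triMat (n + 1) a).det (triMat n fun i => a (i + 1)).det := by
  induction n generalizing a with
  | zero =>
    rw [det_triMat_zero]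
    exact isCoprime_one_right
  | succ n ih =>
    rw [det_triMat_add_two, IsCoprime.mul_sub_right_left_iff]
    exact (ih fun i => a (i + 1)).symm

theorem ncf_cons_of_ne_nil (b : ℚ) {l : List ℚ} (hl : l ≠ []) : ncf (b :: l) = b - 1 / ncf l := by
  obtain ⟨c, l, rfl⟩ := List.exists_cons_of_ne_nil hl
  rfl

theorem ncf_eq_det_triMat_div (n : ℕ) (a : ℕ → ℤ) (ha : ∀ i, 1 ≤ i → i ≤ n + 1 → 2 ≤ a i) :
    ncf ((List.range (n + 1)).map fun i => (a (i + 1) : ℚ)) =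
      (triMat (n + 1) a).det / (triMat n fun i => a (i + 1)).det := by
  induction n generalizing a with
  | zero => simp [ncf, triMat]
  | succ n ih =>
    have ha' : ∀ i, 1 ≤ i → i ≤ n + 1 → 2 ≤ a (i + 1) := fun i h1 h2 =>
      ha (i + 1) (by omega) (by omega)
    obtain ⟨hpos, hlt⟩ := det_triMat_tail_mem_Ioo n _ ha'
    have hne : ((triMat (n + 1) fun i => a (i + 1)).det : ℚ) ≠ 0 := by
      exact_mod_cast (hpos.trans hlt).ne'
    rw [List.range_succ_eq_map, List.map_cons, List.map_map, ncf_cons_of_ne_nil _ (by simp)]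
    rw [Function.comp_def, ih (fun i => a (i + 1)) ha', det_triMat_add_two]
    rw [Int.cast_sub, Int.cast_mul, one_div_div]
    field_simp

theorem Matrix.natCard_quotient_range_toLin' {ι : Type*} [Fintype ι] [DecidableEq ι]
    (A : Matrix ι ι ℤ) (hA : A.det ≠ 0) :
    Nat.card ((ι → ℤ) ⧸ LinearMap.range A.toLin') = A.det.natAbs := by
  have hinj : Function.Injective A.toLin' := by
    rw [← LinearMap.ker_eq_bot, LinearMap.ker_eq_bot']
    intro v hv
    by_contra hne
    exact hA (exists_mulVec_eq_zero_iff.mp ⟨v, hne, hv⟩)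
  rw [← Submodule.natAbs_det_equiv _ (LinearEquiv.ofInjective _ hinj), ← LinearMap.det_toLin']
  rfl

theorem isAddCyclic_quotient_of_span_singleton_sup_eq_top {M : Type*} [AddCommGroup M]
    (N : Submodule ℤ M) (x : M) (h : Submodule.span ℤ {x} ⊔ N = ⊤) : IsAddCyclic (M ⧸ N) := by
  refine ⟨N.mkQ x, fun y => ?_⟩
  obtain ⟨y, rfl⟩ := N.mkQ_surjective y
  obtain ⟨u, hu, v, hv, rfl⟩ := Submodule.mem_sup.mp (h ▸ Submodule.mem_top : y ∈ _)
  obtain ⟨c, rfl⟩ := Submodule.mem_span_singleton.mp hu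
  exact ⟨c, by simp [(Submodule.Quotient.mk_eq_zero N).mpr hv]⟩

/-- `stdVec m k` is the `k`-th standard basis vector, and `0` when `k ≥ m`, so that the
column relations of `triMat` hold uniformly at both ends. -/
def stdVec (m k : ℕ) : Fin m → ℤ :=
  if h : k < m then Pi.single ⟨k, h⟩ 1 else 0

theorem stdVec_apply (m k : ℕ) (i : Fin m) : stdVec m k i = if (i : ℕ) = k then 1 else 0 := by
  unfold stdVec
  split_ifs <;> simp_all [Pi.single_apply, Fin.ext_iff]
  omega

theorem toLin'_triMat_stdVec_zero (m : ℕ) (a : ℕ → ℤ) :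
    (triMat m a).toLin' (stdVec m 0) = a 1 • stdVec m 0 - stdVec m 1 := by
  rcases Nat.eq_zero_or_pos m with rfl | hm
  · exact Subsingleton.elim _ _
  ext i
  conv_lhs => rw [stdVec, dif_pos hm, toLin'_apply, mulVec_single_one]
  simp [triMat, stdVec_apply, Fin.ext_iff]
  grind

theorem toLin'_triMat_stdVec_succ (m : ℕ) (a : ℕ → ℤ) {j : ℕ} (hj : j + 1 < m) :
    (triMat m a).toLin' (stdVec m (j + 1)) =
      a (j + 2) • stdVec m (j + 1) - stdVec m j - stdVec m (j + 2) := by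
  ext i
  conv_lhs => rw [stdVec, dif_pos hj, toLin'_apply, mulVec_single_one]
  simp [triMat, stdVec_apply, Fin.ext_iff]
  grind

theorem span_stdVec_zero_sup_range_triMat (m : ℕ) (a : ℕ → ℤ) :
    Submodule.span ℤ {stdVec m 0} ⊔ LinearMap.range (triMat m a).toLin' = ⊤ := by
  set S := Submodule.span ℤ {stdVec m 0} ⊔ LinearMap.range (triMat m a).toLin'
  have hcol : ∀ k, (triMat m a).toLin' (stdVec m k) ∈ S := fun k =>
    Submodule.mem_sup_right (LinearMap.mem_range_self _ _)
  have hmem : ∀ k, stdVec m k ∈ S ∧ stdVec m (k + 1) ∈ S := by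
    intro k
    induction k with
    | zero =>
      have h0 : stdVec m 0 ∈ S := Submodule.mem_sup_left (Submodule.mem_span_singleton_self _)
      refine ⟨h0, ?_⟩
      rw [show stdVec m 1 = a 1 • stdVec m 0 - (triMat m a).toLin' (stdVec m 0) by
        rw [toLin'_triMat_stdVec_zero, sub_sub_cancel]]
      exact S.sub_mem (S.smul_mem _ h0) (hcol 0)
    | succ k ih =>
      refine ⟨ih.2, ?_⟩
      by_cases hk : k + 1 < m
      · rw [show stdVec m (k + 2) = a (k + 2) • stdVec m (k + 1) - stdVec m k -
            (triMat m a).toLin' (stdVec m (k + 1)) by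
          rw [toLin'_triMat_stdVec_succ m a hk, sub_sub_cancel]]
        exact S.sub_mem (S.sub_mem (S.smul_mem _ ih.2) ih.1) (hcol _)
      · rw [stdVec, dif_neg (by omega)]
        exact S.zero_mem
  rw [eq_top_iff, ← (Pi.basisFun ℤ (Fin m)).span_eq, Submodule.span_le]
  rintro _ ⟨i, rfl⟩
  simpa [stdVec] using (hmem i).1

theorem stmt15 (m : ℕ) (hm : 1 ≤ m) (a : ℕ → ℤ) (ha : ∀ i, 1 ≤ i → i ≤ m → 2 ≤ a i)
    (p q : ℕ) (hq : 0 < q) (hcop : Nat.Coprime p q)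
    (hpq : (p : ℚ) / (q : ℚ) = ncf ((List.range m).map fun i => ((a (i + 1) : ℤ) : ℚ))) :
    (triMat m a).det = (p : ℤ) ∧
      IsAddCyclic ((Fin m → ℤ) ⧸ LinearMap.range (Matrix.toLin' (triMat m a))) ∧
      Nat.card ((Fin m → ℤ) ⧸ LinearMap.range (Matrix.toLin' (triMat m a))) = p := by
  obtain ⟨n, rfl⟩ : ∃ n, m = n + 1 := ⟨m - 1, by omega⟩
  obtain ⟨htail_pos, htail_lt⟩ := det_triMat_tail_mem_Ioo n a ha
  rw [ncf_eq_det_triMat_div n a ha] at hpq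
  have hdet : (triMat (n + 1) a).det = p :=
    (Rat.div_int_inj (a := p) (b := q) (by exact_mod_cast hq) htail_pos hcop
      (Int.isCoprime_iff_gcd_eq_one.mp (isCoprime_det_triMat_tail n a))
      (by rw [Int.cast_natCast, Int.cast_natCast, hpq])).1.symm
  refine ⟨hdet, isAddCyclic_quotient_of_span_singleton_sup_eq_top _ _
    (span_stdVec_zero_sup_range_triMat _ a), ?_⟩
  rw [natCard_quotient_range_toLin' _ (htail_pos.trans htail_lt).ne', hdet, Int.natAbs_natCast]
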